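/- arXiv:2508.10842 — 2 statements merged into one kernel-verified Lean document; each statement's English description precedes it below -/
import Mathlib

section
/- Let n ≥ 3 and let j, k be integers with 0 < j < k < n. Define Lⁿ(j, k) := arcsin( (k − j) / (√k · √(n − j)) ). Then Lⁿ(j, k) + Lⁿ(j, n − k + j) + Lⁿ(n − k, n − k + j) = π/2. -/
/-!
Put `a = j`, `b = k - j`, `c = n - k`, so that `k = a + b`, `n - j = b + c`, `n - k + j = c + a`.
If `sin θ = b / √((a + b)(b + c))` then `cos² θ = (ab + bc + ca) / ((a + b)(b + c))`, so the three
angles are `arctan (a / s)`, `arctan (b / s)`, `arctan (c / s)` with `s² = ab + bc + ca`. Their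
tangents `x, y, z` satisfy `xy + yz + zx = 1`, which is exactly the condition for three positive
arctangents to add up to `π / 2`.
-/

open Real

theorem Real.arcsin_div_sqrt_mul_sqrt {q u v : ℝ} (hu : 0 ≤ u) (h : 0 < u * v - q ^ 2) :
    arcsin (q / (√u * √v)) = arctan (q / √(u * v - q ^ 2)) := by
  have hr := sqrt_pos.2 h
  have huv : 0 < u * v := by nlinarith [sq_nonneg q]
  rw [arctan_eq_arcsin, ← sqrt_mul hu, div_pow, sq_sqrt h.le,
    one_add_div h.ne', sub_add_cancel, sqrt_div huv.le, div_div_div_cancel_right₀ hr.ne']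

theorem Real.arctan_add_arctan_add_arctan {x y z : ℝ} (hx : 0 < x) (hy : 0 < y) (hz : 0 < z)
    (h : x * y + y * z + z * x = 1) : arctan x + arctan y + arctan z = π / 2 := by
  have hxy : x * y < 1 := by nlinarith [mul_pos hy hz, mul_pos hz hx]
  have hw : 0 < (x + y) / (1 - x * y) := div_pos (by linarith) (by linarith)
  have hz_inv : z = ((x + y) / (1 - x * y))⁻¹ := by
    rw [inv_div, eq_div_iff (by linarith)]
    linarith
  rw [arctan_add hxy, hz_inv, arctan_inv_of_pos hw]
  ring

theorem Real.arctan_div_sqrt_add_arctan_div_sqrt_add_arctan_div_sqrt {a b c : ℝ}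
    (ha : 0 < a) (hb : 0 < b) (hc : 0 < c) :
    arctan (a / √(a * b + b * c + c * a)) + arctan (b / √(a * b + b * c + c * a))
      + arctan (c / √(a * b + b * c + c * a)) = π / 2 := by
  refine arctan_add_arctan_add_arctan (by positivity) (by positivity) (by positivity) ?_
  field_simp
  rw [sq_sqrt (by positivity)]

theorem stmt_1 (n j k : ℕ) (hj : 0 < j) (hjk : j < k) (hkn : k < n) :
    Real.arcsin (((k : ℝ) - j) / (Real.sqrt (k : ℝ) * Real.sqrt ((n : ℝ) - j)))
      + Real.arcsin ((((n : ℝ) - k + j) - j) /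
          (Real.sqrt ((n : ℝ) - k + j) * Real.sqrt ((n : ℝ) - j)))
      + Real.arcsin ((((n : ℝ) - k + j) - ((n : ℝ) - k)) /
          (Real.sqrt ((n : ℝ) - k + j) * Real.sqrt ((n : ℝ) - ((n : ℝ) - k))))
    = Real.pi / 2 := by
  have hj' : (0 : ℝ) < j := by exact_mod_cast hj
  have hkj : (0 : ℝ) < k - j := sub_pos.2 (by exact_mod_cast hjk)
  have hnk : (0 : ℝ) < n - k := sub_pos.2 (by exact_mod_cast hkn)
  set S : ℝ := (k - j) * (n - k) + (n - k) * j + j * (k - j)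
  have hS : 0 < S := by positivity
  have h₁ : (k : ℝ) * (n - j) - (k - j) ^ 2 = S := by ring
  have h₂ : ((n : ℝ) - k + j) * (n - j) - (n - k) ^ 2 = S := by ring
  have h₃ : ((n : ℝ) - k + j) * k - j ^ 2 = S := by ring
  rw [add_sub_cancel_right, add_sub_cancel_left, sub_sub_cancel,
    arcsin_div_sqrt_mul_sqrt (by positivity) (h₁ ▸ hS),
    arcsin_div_sqrt_mul_sqrt (by linarith) (h₂ ▸ hS),
    arcsin_div_sqrt_mul_sqrt (by linarith) (h₃ ▸ hS), h₁, h₂, h₃]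
  exact arctan_div_sqrt_add_arctan_div_sqrt_add_arctan_div_sqrt hkj hnk hj'
end

section
/- Let 0 < k_tot < 1, a > 0 and x be a real number with a < x ≤ 1. Let (kₙ) be a sequence of reals in (0,1) with kₙ^{n−1} → k_tot, and let (qₙ), (dₙ) be sequences of natural numbers with qₙ/n → a, dₙ/n → x and dₙ ≥ qₙ − 1 for all n. Then ( (1 − kₙ^{qₙ})² · kₙ^{dₙ+1−qₙ} ) / ( qₙ(1 − kₙ²) − 2kₙ(1 − kₙ^{qₙ}) ) converges, as n → ∞, to ( (1 − k_tot^{a})² · k_tot^{x−a} ) / ( −2( a·log(k_tot) + (1 − k_tot^{a}) ) ). -/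
/-!
Writing `kₙ = exp ℓₙ`, the hypothesis `kₙ^(n-1) → k_tot` says `n ℓₙ → log k_tot`. Hence
`kₙ^{cₙ} = exp (cₙ ℓₙ) → k_tot^b` whenever `cₙ / n → b`, which handles every power of `kₙ`
except the one in `qₙ (1 - kₙ²)`; there the first-order expansion `1 - exp t = -t + o(t)`
gives `n (1 - kₙ²) → -2 log k_tot`. The limiting denominator is nonzero because
`k_tot^a = exp (a log k_tot) > 1 + a log k_tot`.
-/

open Filter Real Topology Asymptotics

theorem tendsto_zero_of_tendsto_mul_of_tendsto_atTop {α : Type*} {l : Filter α} {c v : α → ℝ}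
    {ℓ : ℝ} (hc : Tendsto c l atTop) (h : Tendsto (fun i => c i * v i) l (𝓝 ℓ)) :
    Tendsto v l (𝓝 0) := by
  have h' := h.mul (tendsto_inv_atTop_zero.comp hc)
  rw [mul_zero] at h'
  refine h'.congr' ?_
  filter_upwards [hc.eventually_ne_atTop 0] with i hi
  simp only [Function.comp_apply, mul_comm (c i), mul_inv_cancel_right₀ hi]

theorem tendsto_mul_of_tendsto_div_natCast {c w : ℕ → ℝ} {b m : ℝ}
    (hc : Tendsto (fun n => c n / n) atTop (𝓝 b)) (hw : Tendsto (fun n => n * w n) atTop (𝓝 m)) :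
    Tendsto (fun n => c n * w n) atTop (𝓝 (b * m)) := by
  refine (hc.mul hw).congr' ?_
  filter_upwards [eventually_ne_atTop 0] with n hn
  field_simp

theorem tendsto_natCast_mul_log_of_tendsto_pow_pred {k : ℕ → ℝ} {K : ℝ} (hK : K ≠ 0)
    (h : Tendsto (fun n => k n ^ (n - 1)) atTop (𝓝 K)) :
    Tendsto (fun n : ℕ => n * log (k n)) atTop (𝓝 (log K)) := by
  have hpred : Tendsto (fun n : ℕ => ((n - 1 : ℕ) : ℝ) * log (k n)) atTop (𝓝 (log K)) := by
    simpa only [Function.comp_def, Real.log_pow] using ((continuousAt_log hK).tendsto.comp h)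
  have hlog : Tendsto (fun n => log (k n)) atTop (𝓝 0) :=
    tendsto_zero_of_tendsto_mul_of_tendsto_atTop
      (tendsto_natCast_atTop_atTop.comp (tendsto_sub_atTop_nat 1)) hpred
  simpa only [add_zero] using (hpred.add hlog).congr' <| by
    filter_upwards [eventually_ge_atTop 1] with n hn
    rw [Nat.cast_sub hn, Nat.cast_one]
    ring

section
variable {k : ℕ → ℝ} {K : ℝ}

theorem tendsto_pow_of_tendsto_natCast_mul_log (hk : ∀ n, 0 < k n) (hK : 0 < K)
    (hlog : Tendsto (fun n : ℕ => n * log (k n)) atTop (𝓝 (log K))) {c : ℕ → ℕ} {b : ℝ}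
    (hc : Tendsto (fun n => (c n : ℝ) / n) atTop (𝓝 b)) :
    Tendsto (fun n => k n ^ c n) atTop (𝓝 (K ^ b)) := by
  have h := (continuous_exp.tendsto _).comp (tendsto_mul_of_tendsto_div_natCast hc hlog)
  rw [rpow_def_of_pos hK, mul_comm]
  refine h.congr fun n => ?_
  rw [Function.comp_apply, ← Real.log_pow, exp_log (pow_pos (hk n) _)]

theorem tendsto_of_tendsto_natCast_mul_log (hk : ∀ n, 0 < k n) (hK : 0 < K)
    (hlog : Tendsto (fun n : ℕ => n * log (k n)) atTop (𝓝 (log K))) :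
    Tendsto k atTop (𝓝 1) := by
  have h := tendsto_pow_of_tendsto_natCast_mul_log hk hK hlog (c := fun _ => 1)
    (by simpa only [Nat.cast_one] using tendsto_one_div_atTop_nhds_zero_nat)
  simpa only [pow_one, rpow_zero] using h

end

theorem tendsto_natCast_mul_one_sub_of_tendsto_natCast_mul_log {u : ℕ → ℝ} {ℓ : ℝ}
    (hu : ∀ n, 0 < u n) (h : Tendsto (fun n : ℕ => n * log (u n)) atTop (𝓝 ℓ)) :
    Tendsto (fun n : ℕ => n * (1 - u n)) atTop (𝓝 (-ℓ)) := by
  have hlog : Tendsto (fun n => log (u n)) atTop (𝓝 0) :=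
    tendsto_zero_of_tendsto_mul_of_tendsto_atTop tendsto_natCast_atTop_atTop h
  have hexp : (fun t : ℝ => exp t - 1 - t) =o[𝓝 0] fun t => t := by
    simpa [Finset.sum_range_succ, sub_add_eq_sub_sub] using exp_sub_sum_range_succ_isLittleO_pow 1
  -- `n (exp l - 1 - l) = o(n l)` along `l = log uₙ → 0`, and `n l` stays bounded.
  have herr : Tendsto (fun n : ℕ => n * (u n - 1 - log (u n))) atTop (𝓝 0) := by
    rw [← isLittleO_one_iff (F := ℝ)]
    refine (((isBigO_refl (fun n : ℕ => (n : ℝ)) atTop).mul_isLittleO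
      (hexp.comp_tendsto hlog)).trans_isBigO (h.isBigO_one (F := ℝ))).congr_left fun n => ?_
    simp only [Function.comp_apply, exp_log (hu n)]
  simpa only [zero_add] using (herr.add h).neg.congr fun n => by ring

theorem mul_log_add_one_sub_rpow_neg {K a : ℝ} (hK : 0 < K) (hK1 : K ≠ 1) (ha : a ≠ 0) :
    a * log K + (1 - K ^ a) < 0 := by
  have h := add_one_lt_exp (mul_ne_zero ha (log_ne_zero_of_pos_of_ne_one hK hK1))
  rw [mul_comm, ← rpow_def_of_pos hK] at h
  linarith

theorem stmt_9_general (ktot a x : ℝ) (hktot0 : 0 < ktot) (hktot1 : ktot < 1)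
    (ha : 0 < a)
    (kseq : ℕ → ℝ) (hk0 : ∀ n, 0 < kseq n)
    (hklim : Filter.Tendsto (fun n => kseq n ^ (n - 1)) Filter.atTop (nhds ktot))
    (qseq dseq : ℕ → ℕ)
    (hq : Filter.Tendsto (fun n => (qseq n : ℝ) / n) Filter.atTop (nhds a))
    (hd : Filter.Tendsto (fun n => (dseq n : ℝ) / n) Filter.atTop (nhds x))
    (hdq : ∀ n, qseq n - 1 ≤ dseq n) :
    Filter.Tendsto
      (fun n =>
        ((1 - kseq n ^ qseq n) ^ 2 * kseq n ^ (dseq n + 1 - qseq n))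
          / ((qseq n : ℝ) * (1 - kseq n ^ 2) - 2 * kseq n * (1 - kseq n ^ qseq n)))
      Filter.atTop
      (nhds (((1 - ktot ^ a) ^ 2 * ktot ^ (x - a))
        / (-2 * (a * Real.log ktot + (1 - ktot ^ a))))) := by
  have hlog := tendsto_natCast_mul_log_of_tendsto_pow_pred hktot0.ne' hklim
  have hkq := tendsto_pow_of_tendsto_natCast_mul_log hk0 hktot0 hlog hq
  have hgap : Tendsto (fun n => ((dseq n + 1 - qseq n : ℕ) : ℝ) / n) atTop (𝓝 (x - a)) := by
    simpa only [add_zero] using ((hd.add tendsto_one_div_atTop_nhds_zero_nat).sub hq).congr'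
      (by filter_upwards with n
          rw [Nat.cast_sub (by have := hdq n; omega)]
          push_cast
          ring)
  have hkd := tendsto_pow_of_tendsto_natCast_mul_log hk0 hktot0 hlog hgap
  have hsq : Tendsto (fun n : ℕ => n * (1 - kseq n ^ 2)) atTop (𝓝 (-(2 * log ktot))) :=
    tendsto_natCast_mul_one_sub_of_tendsto_natCast_mul_log (fun n => pow_pos (hk0 n) 2)
      (by simpa only [Real.log_pow, Nat.cast_ofNat, mul_left_comm] using hlog.const_mul 2)
  have hden := (tendsto_mul_of_tendsto_div_natCast hq hsq).sub
    (((tendsto_of_tendsto_natCast_mul_log hk0 hktot0 hlog).const_mul 2).mul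
      ((tendsto_const_nhds (x := (1 : ℝ))).sub hkq))
  exact (((tendsto_const_nhds.sub hkq).pow 2).mul hkd).div (by convert hden using 2; ring)
    (mul_ne_zero (by norm_num) (mul_log_add_one_sub_rpow_neg hktot0 hktot1.ne ha.ne').ne)

theorem stmt_9 (ktot a x : ℝ) (hktot0 : 0 < ktot) (hktot1 : ktot < 1)
    (ha : 0 < a) (hax : a < x) (hx1 : x ≤ 1)
    (kseq : ℕ → ℝ) (hk0 : ∀ n, 0 < kseq n) (hk1 : ∀ n, kseq n < 1)
    (hklim : Filter.Tendsto (fun n => kseq n ^ (n - 1)) Filter.atTop (nhds ktot))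
    (qseq dseq : ℕ → ℕ)
    (hq : Filter.Tendsto (fun n => (qseq n : ℝ) / n) Filter.atTop (nhds a))
    (hd : Filter.Tendsto (fun n => (dseq n : ℝ) / n) Filter.atTop (nhds x))
    (hdq : ∀ n, qseq n - 1 ≤ dseq n) :
    Filter.Tendsto
      (fun n =>
        ((1 - kseq n ^ qseq n) ^ 2 * kseq n ^ (dseq n + 1 - qseq n))
          / ((qseq n : ℝ) * (1 - kseq n ^ 2) - 2 * kseq n * (1 - kseq n ^ qseq n)))
      Filter.atTop
      (nhds (((1 - ktot ^ a) ^ 2 * ktot ^ (x - a))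
        / (-2 * (a * Real.log ktot + (1 - ktot ^ a))))) :=
  stmt_9_general ktot a x hktot0 hktot1 ha kseq hk0 hklim qseq dseq hq hd hdq
end
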